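/- arXiv:1210.6741 — 5 statements merged into one kernel-verified Lean document; each statement's English description precedes it below -/
import Mathlib

section
/- The Hilbert cube Q = ∏_{i=1}^∞ [−1,1], endowed with the product topology, is homogeneous: for every pair of points x, y ∈ Q there exists a homeomorphism h : Q → Q with h(x) = y. -/
/-!
Points all of whose coordinates lie in the open interval `(-1, 1)` can be moved to one another
coordinatewise, by the Möbius maps `s ↦ (s - a) / (1 - a s)` of `[-1, 1]`. So it suffices to push
an arbitrary point into this pseudo-interior.

Coordinate `n` is pushed inside by a homeomorphism of the square formed by coordinates `n` and a
far-away coordinate `c`: rescaling a small rotation of the plane so that it preserves the sup norm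
gives a homeomorphism of the square that moves first coordinates only slightly but carries the
points of a vertical edge near a corner onto a horizontal edge. The arbitrary motion of coordinate
`c` costs at most `2⁻ᶜ` in the product metric. Composing these steps, each small compared with the
modulus of continuity of the inverse of the previous composite, the composites converge to a
homeomorphism, and coordinate `n` is never touched after step `n`.
-/

/-- The Hilbert cube: the countably infinite product `∏_{i} [-1,1]`,
endowed with the product topology. -/
abbrev HilbertCube : Type := ℕ → (Set.Icc (-1 : ℝ) 1)

open Set Filter Topology

local notation "𝕀" => Icc (-1 : ℝ) 1

section InductiveConvergence

theorem le_mul_half_pow_of_halving {m : ℕ → ℝ} (hm : ∀ n, m (n + 1) ≤ m n / 2) (n j : ℕ) :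
    m (n + j) ≤ m n * (1 / 2) ^ j := by
  induction j with
  | zero => simp
  | succ j ih => rw [← add_assoc, pow_succ]; linarith [hm (n + j)]

theorem dist_le_of_halving {X : Type*} [PseudoMetricSpace X] {G : ℕ → X → X} {m : ℕ → ℝ}
    (hm : ∀ n, m (n + 1) ≤ m n / 2)
    (hG : ∀ n q, dist (G (n + 1) q) (G n q) ≤ m n / 2) {q a : X}
    (hq : Tendsto (fun n => G n q) atTop (𝓝 a)) (n : ℕ) : dist (G n q) a ≤ m n := by
  have key := dist_le_of_le_geometric_of_tendsto₀ (1 / 2) (m n / 2) (f := fun j => G (j + n) q)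
    (by norm_num) (fun j => by
      rw [dist_comm, add_right_comm, add_comm j n]
      linarith [hG (n + j) q, le_mul_half_pow_of_halving hm n j,
        show m n / 2 * (1 / 2) ^ j = m n * (1 / 2) ^ j / 2 by ring])
    ((tendsto_add_atTop_iff_nat n).2 hq)
  rw [zero_add] at key
  linarith [show m n / 2 / (1 - 1 / 2 : ℝ) = m n by ring]

variable {X : Type*} [MetricSpace X] [CompactSpace X]

/- `2 * m n` is a scale at which `(G n).symm` moves points apart by at most `2⁻ⁿ`, while all the
later steps together move a point by at most `m n`: this is what makes the limit injective. -/
theorem exists_homeomorph_tendsto_of_halving (G : ℕ → X ≃ₜ X) (m : ℕ → ℝ)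
    (hm : ∀ n, m (n + 1) ≤ m n / 2) (hG : ∀ n q, dist (G (n + 1) q) (G n q) ≤ m n / 2)
    (hGsymm : ∀ n a b, dist a b ≤ 2 * m n → dist ((G n).symm a) ((G n).symm b) ≤ (1 / 2) ^ n) :
    ∃ F : X ≃ₜ X, ∀ q, Tendsto (fun n => G n q) atTop (𝓝 (F q)) := by
  have hm_le : ∀ n, m n ≤ m 0 * (1 / 2) ^ n := fun n => by
    simpa using le_mul_half_pow_of_halving hm 0 n
  have hm_lim : Tendsto (fun n => m 0 * (1 / 2 : ℝ) ^ n) atTop (𝓝 0) := by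
    simpa using (tendsto_pow_atTop_nhds_zero_of_lt_one (r := (1 / 2 : ℝ)) (by norm_num)
      (by norm_num)).const_mul (m 0)
  have hcauchy : ∀ q, CauchySeq fun n => G n q := fun q =>
    cauchySeq_of_le_geometric (1 / 2) (m 0 / 2) (by norm_num) fun n => by
      rw [dist_comm]
      linarith [hG n q, hm_le n, show m 0 / 2 * (1 / 2) ^ n = m 0 * (1 / 2) ^ n / 2 by ring]
  choose F hF using fun q => cauchySeq_tendsto_of_complete (hcauchy q)
  have hdist : ∀ n q, dist (G n q) (F q) ≤ m n := fun n q => dist_le_of_halving hm hG (hF q) n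
  have hF_cont : Continuous F := by
    refine TendstoUniformly.continuous (F := fun n => G n) (p := atTop) ?_
      (Frequently.of_forall fun n => (G n).continuous)
    rw [Metric.tendstoUniformly_iff]
    intro ε hε
    filter_upwards [hm_lim.eventually (gt_mem_nhds hε)] with n hn q
    rw [dist_comm]
    exact ((hdist n q).trans (hm_le n)).trans_lt hn
  have hF_inj : Function.Injective F := by
    intro a b hab
    refine dist_le_zero.1 (ge_of_tendsto' (tendsto_pow_atTop_nhds_zero_of_lt_one (r := 1 / 2)
      (by norm_num) (by norm_num)) fun n => ?_)
    have ha := hdist n a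
    rw [hab] at ha
    simpa using hGsymm n (G n a) (G n b)
      (by linarith [dist_triangle_right (G n a) (G n b) (F b), hdist n b])
  have hF_surj : Function.Surjective F := by
    intro z
    have hz : z ∈ closure (range F) := by
      refine mem_closure_of_tendsto (f := fun n => F ((G n).symm z)) (b := atTop) ?_
        (Eventually.of_forall fun n => mem_range_self _)
      rw [tendsto_iff_dist_tendsto_zero]
      refine squeeze_zero (fun _ => dist_nonneg) (fun n => ?_) hm_lim
      simpa [dist_comm] using (hdist n ((G n).symm z)).trans (hm_le n)
    rwa [(isCompact_range hF_cont).isClosed.closure_eq] at hz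
  exact ⟨hF_cont.homeoOfEquivCompactToT2 (f := Equiv.ofBijective F ⟨hF_inj, hF_surj⟩), hF⟩

theorem exists_seq_tendsto_homeomorph (R : ℕ → (X ≃ₜ X) → (X ≃ₜ X) → Prop)
    (hR : ∀ n (G : X ≃ₜ X) (δ : ℝ), 0 < δ →
      ∃ g : X ≃ₜ X, (∀ q, dist (g q) q ≤ δ) ∧ R n G (G.trans g)) :
    ∃ (G : ℕ → X ≃ₜ X) (F : X ≃ₜ X),
      (∀ n, R n (G n) (G (n + 1))) ∧ ∀ q, Tendsto (fun n => G n q) atTop (𝓝 (F q)) := by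
  let Admissible (n : ℕ) (s : (X ≃ₜ X) × ℝ) : Prop :=
    0 < s.2 ∧ ∀ a b, dist a b ≤ 2 * s.2 → dist (s.1.symm a) (s.1.symm b) ≤ (1 / 2) ^ n
  -- the premise `Admissible n s` sits inside the existential, so that `choose` gives a plain
  -- step function to iterate
  have hstep : ∀ n s, ∃ s' : (X ≃ₜ X) × ℝ, Admissible n s → Admissible (n + 1) s' ∧ s'.2 ≤ s.2 / 2 ∧
      (∀ q, dist (s'.1 q) (s.1 q) ≤ s.2 / 2) ∧ R n s.1 s'.1 := by
    intro n s
    by_cases hs : Admissible n s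
    swap
    · exact ⟨s, fun h => absurd h hs⟩
    obtain ⟨g, hg_near, hg_R⟩ := hR n s.1 (s.2 / 2) (by linarith [hs.1])
    obtain ⟨η, hη, hη_mod⟩ := Metric.uniformContinuous_iff_le.1
      (CompactSpace.uniformContinuous_of_continuous (s.1.trans g).symm.continuous)
      ((1 / 2) ^ (n + 1)) (by positivity)
    refine ⟨(s.1.trans g, min (s.2 / 2) (η / 2)), fun _ => ⟨⟨?_, fun a b hab => ?_⟩, ?_, ?_, ?_⟩⟩
    · exact lt_min (by linarith [hs.1]) (by linarith)
    · exact hη_mod (hab.trans (by linarith [min_le_right (s.2 / 2) (η / 2)]))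
    · exact min_le_left _ _
    · exact fun q => hg_near (s.1 q)
    · exact hg_R
  choose next hnext using hstep
  let seq : ℕ → (X ≃ₜ X) × ℝ := fun n => Nat.rec (Homeomorph.refl X, 1 / 2) next n
  have hgood : ∀ n, Admissible n (seq n) := by
    intro n
    induction n with
    | zero => exact ⟨by norm_num [seq], fun a b hab => by simpa [seq] using hab⟩
    | succ n ih => exact (hnext n (seq n) ih).1
  obtain ⟨F, hF⟩ := exists_homeomorph_tendsto_of_halving (fun n => (seq n).1) (fun n => (seq n).2)
    (fun n => (hnext n _ (hgood n)).2.1) (fun n => (hnext n _ (hgood n)).2.2.1)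
    (fun n => (hgood n).2)
  exact ⟨fun n => (seq n).1, F, fun n => (hnext n _ (hgood n)).2.2.2, hF⟩

end InductiveConvergence

section Interval

noncomputable def moebius (a s : ℝ) : ℝ := (s - a) / (1 - a * s)

variable {a s : ℝ}

theorem one_sub_mul_pos_of_abs_lt (ha : |a| < 1) (hs : s ∈ 𝕀) : 0 < 1 - a * s := by
  have hs' : |s| ≤ 1 := abs_le.2 hs
  have : |a * s| < 1 := by rw [abs_mul]; nlinarith [abs_nonneg a, abs_nonneg s]
  linarith [le_abs_self (a * s)]

theorem moebius_mem_Icc (ha : |a| < 1) (hs : s ∈ 𝕀) :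
    moebius a s ∈ 𝕀 := by
  have hd := one_sub_mul_pos_of_abs_lt ha hs
  have := abs_lt.1 ha
  rw [moebius, mem_Icc, le_div_iff₀ hd, div_le_iff₀ hd]
  constructor <;> nlinarith [hs.1, hs.2]

theorem moebius_neg_moebius (ha : |a| < 1) (hs : s ∈ 𝕀) :
    moebius (-a) (moebius a s) = s := by
  have hd := (one_sub_mul_pos_of_abs_lt ha hs).ne'
  have h2 : 1 - a ^ 2 ≠ 0 := by nlinarith [abs_lt.1 ha]
  have hnum : (s - a) / (1 - a * s) - -a = s * (1 - a ^ 2) / (1 - a * s) := by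
    rw [eq_div_iff hd, sub_mul, div_mul_cancel₀ _ hd]; ring
  have hden : 1 - -a * ((s - a) / (1 - a * s)) = (1 - a ^ 2) / (1 - a * s) := by
    rw [eq_div_iff hd, sub_mul, mul_assoc, div_mul_cancel₀ _ hd]; ring
  rw [moebius, moebius, hnum, hden, div_div_div_cancel_right₀ hd, mul_div_assoc, div_self h2,
    mul_one]

noncomputable def moebiusHomeomorph (a : ℝ) (ha : |a| < 1) : 𝕀 ≃ₜ 𝕀 where
  toFun s := ⟨moebius a s, moebius_mem_Icc ha s.2⟩
  invFun s := ⟨moebius (-a) s, moebius_mem_Icc (by rwa [abs_neg]) s.2⟩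
  left_inv s := Subtype.ext (moebius_neg_moebius ha s.2)
  right_inv s := Subtype.ext (by simpa using moebius_neg_moebius (a := -a) (by rwa [abs_neg]) s.2)
  continuous_toFun := by
    refine Continuous.subtype_mk (Continuous.div (by fun_prop) (by fun_prop)
      fun s => (one_sub_mul_pos_of_abs_lt ha s.2).ne') _
  continuous_invFun := by
    refine Continuous.subtype_mk (Continuous.div (by fun_prop) (by fun_prop)
      fun s => (one_sub_mul_pos_of_abs_lt (a := -a) (by rwa [abs_neg]) s.2).ne') _

theorem exists_homeomorph_Icc_apply_eq {a b : 𝕀} (ha : |(a : ℝ)| < 1)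
    (hb : |(b : ℝ)| < 1) : ∃ φ : 𝕀 ≃ₜ 𝕀, φ a = b := by
  refine ⟨(moebiusHomeomorph a ha).trans (moebiusHomeomorph b hb).symm, ?_⟩
  rw [Homeomorph.trans_apply, Homeomorph.symm_apply_eq]
  ext
  simp [moebiusHomeomorph, moebius]

end Interval

section NormRescaled

variable {E : Type*} [NormedAddCommGroup E] [NormedSpace ℝ E]

noncomputable def normRescaled (A : E ≃L[ℝ] E) (p : E) : E := (‖p‖ / ‖A p‖) • A p

variable (A : E ≃L[ℝ] E)

theorem norm_normRescaled (p : E) : ‖normRescaled A p‖ = ‖p‖ := by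
  rcases eq_or_ne p 0 with rfl | hp
  · simp [normRescaled]
  · have hAp : ‖A p‖ ≠ 0 := by simpa using hp
    rw [normRescaled, norm_smul, Real.norm_of_nonneg (by positivity), div_mul_cancel₀ _ hAp]

theorem normRescaled_symm_normRescaled (p : E) : normRescaled A.symm (normRescaled A p) = p := by
  rcases eq_or_ne p 0 with rfl | hp
  · simp [normRescaled]
  · have hAp : ‖A p‖ ≠ 0 := by simpa using hp
    have hp' : ‖p‖ ≠ 0 := by simpa using hp
    rw [normRescaled, norm_normRescaled, normRescaled, map_smul, A.symm_apply_apply, norm_smul,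
      Real.norm_of_nonneg (by positivity), smul_smul]
    field_simp
    simp

theorem continuous_normRescaled : Continuous (normRescaled A) := by
  rw [continuous_iff_continuousAt]
  intro p
  rcases eq_or_ne p 0 with rfl | hp
  · have h0 : normRescaled A 0 = 0 := by simp [normRescaled]
    rw [ContinuousAt, h0, tendsto_zero_iff_norm_tendsto_zero]
    simpa [norm_normRescaled] using continuous_norm.tendsto (0 : E)
  · exact (continuous_norm.continuousAt.div (continuous_norm.comp A.continuous).continuousAt
      (by simpa using hp)).smul A.continuous.continuousAt

theorem norm_normRescaled_sub_le (p : E) : ‖normRescaled A p - p‖ ≤ 2 * ‖A p - p‖ := by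
  rcases eq_or_ne p 0 with rfl | hp
  · simp [normRescaled]
  have hAp : ‖A p‖ ≠ 0 := by simpa using hp
  have hrescale : ‖normRescaled A p - A p‖ = |‖p‖ - ‖A p‖| := by
    have hcoef : ‖p‖ / ‖A p‖ - 1 = (‖p‖ - ‖A p‖) / ‖A p‖ := by field_simp
    have hsub : normRescaled A p - A p = (‖p‖ / ‖A p‖ - 1) • A p := by
      rw [sub_smul, one_smul, normRescaled]
    rw [hsub, norm_smul, hcoef, Real.norm_eq_abs, abs_div, abs_norm,
      div_mul_cancel₀ _ hAp]
  calc ‖normRescaled A p - p‖ ≤ ‖normRescaled A p - A p‖ + ‖A p - p‖ :=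
        norm_sub_le_norm_sub_add_norm_sub _ _ _
    _ ≤ ‖A p - p‖ + ‖A p - p‖ := by
        rw [hrescale, ← norm_neg (A p - p), neg_sub]
        gcongr
        exact abs_norm_sub_norm_le _ _
    _ = 2 * ‖A p - p‖ := by ring

noncomputable def normRescaledHomeomorph : E ≃ₜ E where
  toFun := normRescaled A
  invFun := normRescaled A.symm
  left_inv := normRescaled_symm_normRescaled A
  right_inv := normRescaled_symm_normRescaled A.symm
  continuous_toFun := continuous_normRescaled A
  continuous_invFun := continuous_normRescaled A.symm

end NormRescaled

section Square

noncomputable def rotScale (t : ℝ) : (ℝ × ℝ) ≃L[ℝ] (ℝ × ℝ) :=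
  LinearEquiv.toContinuousLinearEquiv
    { toFun := fun p => (p.1 - t * p.2, t * p.1 + p.2)
      invFun := fun p => ((p.1 + t * p.2) / (1 + t ^ 2), (p.2 - t * p.1) / (1 + t ^ 2))
      map_add' := fun p q => by ext <;> simp <;> ring
      map_smul' := fun c p => by ext <;> simp <;> ring
      left_inv := fun p => by
        have : 1 + t ^ 2 ≠ 0 := by positivity
        ext <;> field_simp <;> ring
      right_inv := fun p => by
        have : 1 + t ^ 2 ≠ 0 := by positivity
        ext <;> field_simp <;> ring }

theorem rotScale_apply (t : ℝ) (p : ℝ × ℝ) : rotScale t p = (p.1 - t * p.2, t * p.1 + p.2) := rfl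

theorem mem_Icc_prod_Icc_iff_norm_le (p : ℝ × ℝ) : p ∈ 𝕀 ×ˢ 𝕀 ↔ ‖p‖ ≤ 1 := by
  simp only [mem_prod, mem_Icc, Prod.norm_def, max_le_iff, Real.norm_eq_abs, abs_le]

noncomputable def squareHomeomorph (e : ℝ × ℝ ≃ₜ ℝ × ℝ) (he : ∀ p, ‖e p‖ = ‖p‖) : 𝕀 × 𝕀 ≃ₜ 𝕀 × 𝕀 :=
  (Homeomorph.Set.prod 𝕀 𝕀).symm.trans ((e.subtype fun p => by
    rw [mem_Icc_prod_Icc_iff_norm_le, mem_Icc_prod_Icc_iff_norm_le, he]).trans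
    (Homeomorph.Set.prod 𝕀 𝕀))

noncomputable def rotSquare (t : ℝ) : 𝕀 × 𝕀 ≃ₜ 𝕀 × 𝕀 :=
  squareHomeomorph (normRescaledHomeomorph (rotScale t)) (norm_normRescaled _)

theorem rotSquare_fst (t : ℝ) (q : 𝕀 × 𝕀) :
    ((rotSquare t q).1 : ℝ) = (normRescaled (rotScale t) (q.1, q.2)).1 := rfl

theorem norm_coe_prod_le_one (q : 𝕀 × 𝕀) : ‖((q.1 : ℝ), (q.2 : ℝ))‖ ≤ 1 :=
  (mem_Icc_prod_Icc_iff_norm_le _).1 ⟨q.1.2, q.2.2⟩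

theorem abs_rotSquare_fst_sub_le (t : ℝ) (q : 𝕀 × 𝕀) :
    |((rotSquare t q).1 : ℝ) - q.1| ≤ 2 * |t| := by
  set r : ℝ × ℝ := (q.1, q.2)
  have hr : rotScale t r - r = (-(t * r.2), t * r.1) := by
    rw [rotScale_apply]; ext <;> simp
  calc |((rotSquare t q).1 : ℝ) - q.1| = ‖(normRescaled (rotScale t) r - r).1‖ := rfl
    _ ≤ ‖normRescaled (rotScale t) r - r‖ := norm_fst_le _
    _ ≤ 2 * ‖rotScale t r - r‖ := norm_normRescaled_sub_le _ _
    _ = 2 * (|t| * ‖r‖) := by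
        rw [hr, Prod.norm_def, Prod.norm_def]; simp [mul_max_of_nonneg _ _ (abs_nonneg t), max_comm]
    _ ≤ 2 * |t| := by nlinarith [norm_coe_prod_le_one q, abs_nonneg t]

theorem abs_rotSquare_fst_lt_one (t : ℝ) (q : 𝕀 × 𝕀)
    (h : |(q.1 : ℝ) - t * q.2| < |t * q.1 + q.2|) : |((rotSquare t q).1 : ℝ)| < 1 := by
  set r : ℝ × ℝ := (q.1, q.2)
  set a := rotScale t r
  have ha : |a.1| < ‖a‖ := h.trans_le (norm_snd_le a)
  have ha0 : 0 < ‖a‖ := (abs_nonneg _).trans_lt ha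
  rw [rotSquare_fst, normRescaled, Prod.smul_fst, smul_eq_mul, abs_mul,
    abs_of_nonneg (by positivity)]
  calc ‖r‖ / ‖a‖ * |a.1| ≤ 1 / ‖a‖ * |a.1| := by gcongr; exact norm_coe_prod_le_one q
    _ < 1 := by rw [one_div_mul_eq_div, div_lt_one ha0]; exact ha

theorem abs_eq_one_of_not_abs_lt {x : 𝕀} (h : ¬|(x : ℝ)| < 1) : |(x : ℝ)| = 1 :=
  le_antisymm (abs_le.2 x.2) (not_lt.1 h)

theorem abs_rotSquare_fst_lt_one_of_corner {t : ℝ} (ht0 : 0 < t) (q : 𝕀 × 𝕀)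
    (hu : |(q.1 : ℝ)| = 1) (hv : |(q.2 : ℝ)| = 1) :
    |((rotSquare (t * q.1 * q.2) q).1 : ℝ)| < 1 := by
  obtain ⟨⟨u, _⟩, ⟨v, _⟩⟩ := q
  dsimp only at hu hv
  have hu2 : u * u = 1 := by rw [← abs_mul_abs_self, hu, one_mul]
  have hv2 : v * v = 1 := by rw [← abs_mul_abs_self, hv, one_mul]
  apply abs_rotSquare_fst_lt_one
  show |u - t * u * v * v| < |t * u * v * u + v|
  rw [show u - t * u * v * v = u * (1 - t) by linear_combination (-(t * u)) * hv2,
    show t * u * v * u + v = v * (1 + t) by linear_combination (t * v) * hu2,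
    abs_mul, abs_mul, hu, hv, one_mul, one_mul, abs_of_pos (by linarith : 0 < 1 + t)]
  exact abs_lt.2 ⟨by linarith, by linarith⟩

theorem abs_rotSquare_fst_lt_one_of_edge {t : ℝ} (ht0 : 0 < t) (ht1 : t < 1) (q : 𝕀 × 𝕀)
    (hu : |(q.1 : ℝ)| = 1) (hv : (q.2 : ℝ) = 1 - t ^ 2) :
    |((rotSquare (t * q.1) q).1 : ℝ)| < 1 := by
  obtain ⟨⟨u, _⟩, ⟨v, _⟩⟩ := q
  dsimp only at hu hv
  have hu2 : u * u = 1 := by rw [← abs_mul_abs_self, hu, one_mul]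
  apply abs_rotSquare_fst_lt_one
  show |u - t * u * v| < |t * u * u + v|
  rw [hv, show u - t * u * (1 - t ^ 2) = u * (1 - t * (1 - t ^ 2)) by ring,
    show t * u * u + (1 - t ^ 2) = t + (1 - t ^ 2) by linear_combination t * hu2,
    abs_mul, hu, one_mul, abs_of_pos (by nlinarith), abs_of_pos (by nlinarith)]
  nlinarith

theorem exists_square_homeomorph_abs_fst_lt_one (p : 𝕀 × 𝕀) {ε : ℝ} (hε : 0 < ε) :
    ∃ ρ : 𝕀 × 𝕀 ≃ₜ 𝕀 × 𝕀, (∀ q, |((ρ q).1 : ℝ) - q.1| ≤ ε) ∧ |((ρ p).1 : ℝ)| < 1 := by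
  by_cases hu : |(p.1 : ℝ)| < 1
  · exact ⟨Homeomorph.refl _, fun q => by simp [hε.le], hu⟩
  replace hu := abs_eq_one_of_not_abs_lt hu
  set t := min (ε / 2) (1 / 2)
  have ht0 : 0 < t := lt_min (by linarith) (by norm_num)
  have ht1 : t < 1 := (min_le_right _ _).trans_lt (by norm_num)
  have hnear : ∀ s : ℝ, |s| = 1 → ∀ q, |((rotSquare (t * s) q).1 : ℝ) - q.1| ≤ ε := by
    intro s hs q
    refine (abs_rotSquare_fst_sub_le _ _).trans ?_
    rw [abs_mul, hs, mul_one, abs_of_pos ht0]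
    linarith [min_le_left (ε / 2) (1 / 2)]
  by_cases hv : |(p.2 : ℝ)| < 1
  · -- move `p` along its vertical edge close to the corner first
    have hw : |1 - t ^ 2| < 1 := abs_lt.2 ⟨by nlinarith, by nlinarith⟩
    obtain ⟨φ, hφ⟩ := exists_homeomorph_Icc_apply_eq (b := ⟨1 - t ^ 2, abs_le.1 hw.le⟩) hv hw
    exact ⟨(Homeomorph.prodCongr (Homeomorph.refl _) φ).trans (rotSquare (t * p.1)),
      fun q => hnear p.1 hu (q.1, φ q.2),
      abs_rotSquare_fst_lt_one_of_edge ht0 ht1 (p.1, φ p.2) hu (congrArg Subtype.val hφ)⟩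
  · replace hv := abs_eq_one_of_not_abs_lt hv
    refine ⟨rotSquare (t * p.1 * p.2), fun q => ?_, abs_rotSquare_fst_lt_one_of_corner ht0 p hu hv⟩
    rw [mul_assoc]
    exact hnear _ (by rw [abs_mul, hu, hv, one_mul]) q

end Square

section UpdatePair

variable {ι X : Type*} [DecidableEq ι]

def updatePair (i j : ι) (f : X × X → X × X) (q : ι → X) : ι → X :=
  Function.update (Function.update q i (f (q i, q j)).1) j (f (q i, q j)).2

variable {i j : ι} {f g : X × X → X × X}

theorem updatePair_apply_left (hij : i ≠ j) (q : ι → X) :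
    updatePair i j f q i = (f (q i, q j)).1 := by
  simp [updatePair, hij]

theorem updatePair_apply_right (q : ι → X) : updatePair i j f q j = (f (q i, q j)).2 := by
  simp [updatePair]

theorem updatePair_apply_of_ne {k : ι} (hki : k ≠ i) (hkj : k ≠ j) (q : ι → X) :
    updatePair i j f q k = q k := by
  simp [updatePair, hki, hkj]

theorem updatePair_updatePair (hij : i ≠ j) (hgf : ∀ p, g (f p) = p) (q : ι → X) :
    updatePair i j g (updatePair i j f q) = q := by
  have hpair : (updatePair i j f q i, updatePair i j f q j) = f (q i, q j) := by
    rw [updatePair_apply_left hij, updatePair_apply_right]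
  funext k
  by_cases hkj : k = j
  · subst hkj; rw [updatePair_apply_right, hpair, hgf]
  by_cases hki : k = i
  · subst hki; rw [updatePair_apply_left hij, hpair, hgf]
  rw [updatePair_apply_of_ne hki hkj, updatePair_apply_of_ne hki hkj]

variable [TopologicalSpace X]

theorem continuous_updatePair (hf : Continuous f) :
    Continuous (updatePair i j f : (ι → X) → ι → X) := by
  have hfij : Continuous fun q : ι → X => f (q i, q j) := hf.comp (by fun_prop)
  exact (continuous_id.update i (continuous_fst.comp hfij)).update j (continuous_snd.comp hfij)

def updatePairHomeomorph (hij : i ≠ j) (ρ : X × X ≃ₜ X × X) : (ι → X) ≃ₜ (ι → X) where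
  toFun := updatePair i j ρ
  invFun := updatePair i j ρ.symm
  left_inv := updatePair_updatePair hij ρ.symm_apply_apply
  right_inv := updatePair_updatePair hij ρ.apply_symm_apply
  continuous_toFun := continuous_updatePair ρ.continuous
  continuous_invFun := continuous_updatePair ρ.symm.continuous

end UpdatePair

section Cube

attribute [local instance] PiCountable.metricSpace

theorem dist_le_of_eq_off_pair {X : Type*} [MetricSpace X] {q q' : ℕ → X} {i j : ℕ} (hij : i ≠ j)
    (h : ∀ k, k ≠ i → k ≠ j → q k = q' k) : dist q q' ≤ dist (q i) (q' i) + (1 / 2) ^ j := by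
  rw [PiCountable.dist_eq_tsum]
  have hzero : ∀ k ∉ ({i, j} : Finset ℕ),
      min ((2 : ℝ)⁻¹ ^ Encodable.encode k) (dist (q k) (q' k)) = 0 := by
    intro k hk
    simp only [Finset.mem_insert, Finset.mem_singleton, not_or] at hk
    rw [h k hk.1 hk.2, dist_self]
    exact min_eq_right (by positivity)
  rw [tsum_eq_sum hzero, Finset.sum_pair hij]
  gcongr
  · exact min_le_right _ _
  · exact (min_le_left _ _).trans (by simp)

namespace HilbertCube

theorem exists_homeomorph_dist_le_abs_lt_one (y : HilbertCube) (n : ℕ) {δ : ℝ} (hδ : 0 < δ) :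
    ∃ g : HilbertCube ≃ₜ HilbertCube, (∀ q, dist (g q) q ≤ δ) ∧ (∀ q, ∀ k < n, g q k = q k) ∧
      |(g y n : ℝ)| < 1 := by
  obtain ⟨N, hN⟩ := exists_pow_lt_of_lt_one (half_pos hδ) (by norm_num : (1 / 2 : ℝ) < 1)
  set c := max N (n + 1)
  have hnc : n ≠ c := by omega
  have hc : (1 / 2 : ℝ) ^ c ≤ δ / 2 :=
    (pow_le_pow_of_le_one (by norm_num) (by norm_num) (le_max_left _ _)).trans hN.le
  obtain ⟨ρ, hρ_near, hρ_int⟩ := exists_square_homeomorph_abs_fst_lt_one (y n, y c) (half_pos hδ)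
  refine ⟨updatePairHomeomorph hnc ρ, fun q => ?_, fun q k hk => ?_, ?_⟩
  · calc dist (updatePair n c ρ q) q ≤ dist (updatePair n c ρ q n) (q n) + (1 / 2) ^ c :=
          dist_le_of_eq_off_pair hnc fun k hkn hkc => updatePair_apply_of_ne hkn hkc q
      _ ≤ δ / 2 + δ / 2 := by
          gcongr
          rw [updatePair_apply_left hnc, Subtype.dist_eq, Real.dist_eq]
          exact hρ_near (q n, q c)
      _ = δ := add_halves δ
  · exact updatePair_apply_of_ne (by omega) (by omega) q
  · show |((updatePair n c ρ y n : 𝕀) : ℝ)| < 1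
    rw [updatePair_apply_left hnc]
    exact hρ_int

theorem exists_homeomorph_forall_abs_lt_one (x : HilbertCube) :
    ∃ h : HilbertCube ≃ₜ HilbertCube, ∀ k, |(h x k : ℝ)| < 1 := by
  obtain ⟨G, F, hGF, hF⟩ := exists_seq_tendsto_homeomorph
    (fun n (G G' : HilbertCube ≃ₜ HilbertCube) =>
      (∀ q, ∀ k < n, G' q k = G q k) ∧ |(G' x n : ℝ)| < 1)
    fun n G δ hδ => by
      obtain ⟨g, hg_near, hg_fix, hg_int⟩ := exists_homeomorph_dist_le_abs_lt_one (G x) n hδ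
      exact ⟨g, hg_near, fun q k hk => hg_fix (G q) k hk, hg_int⟩
  have hstable : ∀ k, ∀ m ≥ k + 1, G m x k = G (k + 1) x k := by
    intro k m hm
    induction m, hm using Nat.le_induction with
    | base => rfl
    | succ m hm ih => rw [(hGF m).1 x k (by omega), ih]
  refine ⟨F, fun k => ?_⟩
  have hlim : F x k = G (k + 1) x k :=
    tendsto_nhds_unique ((continuous_apply k).tendsto _ |>.comp (hF x))
      (tendsto_const_nhds.congr' (eventually_atTop.2 ⟨k + 1, fun m hm => (hstable k m hm).symm⟩))
  rw [hlim]
  exact (hGF k).2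

end HilbertCube

end Cube

/-- The Hilbert cube is homogeneous: for every pair of points `x, y` there is a
self-homeomorphism taking `x` to `y`. -/
theorem hilbertCube_homogeneous (x y : HilbertCube) :
    ∃ h : HilbertCube ≃ₜ HilbertCube, h x = y := by
  obtain ⟨hx, hx_int⟩ := HilbertCube.exists_homeomorph_forall_abs_lt_one x
  obtain ⟨hy, hy_int⟩ := HilbertCube.exists_homeomorph_forall_abs_lt_one y
  choose φ hφ using fun k => exists_homeomorph_Icc_apply_eq (hx_int k) (hy_int k)
  refine ⟨(hx.trans (Homeomorph.piCongrRight φ)).trans hy.symm, ?_⟩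
  rw [Homeomorph.trans_apply, Homeomorph.symm_apply_eq]
  exact funext hφ
end

section
/- An inverse sequence of groups in which every bonding map is surjective but not injective is not pro-monomorphic; that is, it is not pro-isomorphic to any tower of groups all of whose bonding maps are injective. -/
universe u v

/-- An inverse sequence (tower) of groups: groups `G 0, G 1, G 2, …` together with
bonding homomorphisms `f i : G (i+1) →* G i`. -/
structure GroupTower : Type (u + 1) where
  G : ℕ → Type u
  [grp : ∀ i, Group (G i)]
  f : ∀ i, G (i + 1) →* G i

attribute [instance] GroupTower.grp

/-- The composite bonding homomorphism `G j →* G i` for `i ≤ j`. -/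
def GroupTower.bond (T : GroupTower.{u}) {i j : ℕ} (h : i ≤ j) : T.G j →* T.G i :=
  Nat.leRecOn (C := fun k => T.G k →* T.G i) h (fun {k} g => g.comp (T.f k))
    (MonoidHom.id (T.G i))

/-- Pro-isomorphism of towers of groups: there are strictly increasing index sequences
`I` and `J` and homomorphisms `uu k : S.G (J k) →* T.G (I k)` and
`dd k : T.G (I (k+1)) →* S.G (J k)` forming a commuting ladder diagram. -/
def ProIsomorphic (T : GroupTower.{u}) (S : GroupTower.{v}) : Prop :=
  ∃ (I J : ℕ → ℕ) (hI : StrictMono I) (hJ : StrictMono J)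
    (uu : ∀ k, S.G (J k) →* T.G (I k)) (dd : ∀ k, T.G (I (k + 1)) →* S.G (J k)),
    (∀ k, (uu k).comp (dd k) = T.bond (hI (Nat.lt_succ_self k)).le) ∧
    (∀ k, (dd k).comp (uu (k + 1)) = S.bond (hJ (Nat.lt_succ_self k)).le)

section Aux

lemma GroupTower.bond_succ (T : GroupTower.{u}) {i j : ℕ} (h : i ≤ j) :
    T.bond (h.trans (Nat.le_succ j)) = (T.bond h).comp (T.f j) := by
  unfold GroupTower.bond
  rw [Nat.leRecOn_succ h]

lemma GroupTower.bond_surjective (T : GroupTower.{u})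
    (hsurj : ∀ i, Function.Surjective (T.f i)) {i j : ℕ} (h : i ≤ j) :
    Function.Surjective (T.bond h) := by
  induction j, h using Nat.le_induction with
  | base =>
    have : T.bond (le_refl i) = MonoidHom.id (T.G i) := by
      unfold GroupTower.bond; rw [Nat.leRecOn_self]
    rw [this]; exact Function.surjective_id
  | succ j hij ih =>
    have : T.bond (hij.trans (Nat.le_succ j)) = (T.bond hij).comp (T.f j) :=
      T.bond_succ hij
    rw [this]
    exact ih.comp (hsurj j)

lemma GroupTower.bond_injective (S : GroupTower.{v})
    (hinj : ∀ i, Function.Injective (S.f i)) {i j : ℕ} (h : i ≤ j) :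
    Function.Injective (S.bond h) := by
  induction j, h using Nat.le_induction with
  | base =>
    have : S.bond (le_refl i) = MonoidHom.id (S.G i) := by
      unfold GroupTower.bond; rw [Nat.leRecOn_self]
    rw [this]; exact Function.injective_id
  | succ j hij ih =>
    rw [S.bond_succ hij]
    exact ih.comp (hinj j)

lemma GroupTower.bond_not_injective (T : GroupTower.{u})
    (hninj : ∀ i, ¬ Function.Injective (T.f i)) {i j : ℕ} (h : i < j) :
    ¬ Function.Injective (T.bond h.le) := by
  obtain ⟨m, rfl⟩ : ∃ m, j = m + 1 := ⟨j - 1, by omega⟩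
  have him : i ≤ m := by omega
  have : T.bond h.le = (T.bond him).comp (T.f m) := by
    have := T.bond_succ him
    convert this using 2
  rw [this]
  intro hc
  exact hninj m (Function.Injective.of_comp (f := T.bond him) hc)

end Aux

/-- An inverse sequence of groups in which every bonding map is surjective but not
injective is not pro-monomorphic: it is not pro-isomorphic to any tower of groups all
of whose bonding maps are injective. -/
theorem not_proMonomorphic_of_surjective_not_injective (T : GroupTower.{u})
    (hsurj : ∀ i, Function.Surjective (T.f i))
    (hninj : ∀ i, ¬ Function.Injective (T.f i)) :
    ¬ ∃ S : GroupTower.{v}, (∀ i, Function.Injective (S.f i)) ∧ ProIsomorphic T S := by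
  rintro ⟨S, hSinj, I, J, hI, hJ, uu, dd, hc1, hc2⟩
  -- each uu k is surjective
  have uu_surj : ∀ k, Function.Surjective (uu k) := by
    intro k
    have h1 : Function.Surjective ((uu k).comp (dd k)) := by
      rw [hc1 k]; exact T.bond_surjective hsurj _
    exact Function.Surjective.of_comp h1
  -- uu 1 is injective
  have uu1_inj : Function.Injective (uu 1) := by
    have h1 : Function.Injective ((dd 0).comp (uu 1)) := by
      rw [hc2 0]; exact S.bond_injective hSinj _
    exact Function.Injective.of_comp h1
  -- dd 1 is injective
  have dd1_inj : Function.Injective (dd 1) := by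
    intro a b hab
    obtain ⟨x, rfl⟩ := uu_surj 2 a
    obtain ⟨y, rfl⟩ := uu_surj 2 b
    have h1 : Function.Injective ((dd 1).comp (uu 2)) := by
      rw [hc2 1]; exact S.bond_injective hSinj _
    exact congrArg _ (h1 hab)
  have : Function.Injective (T.bond (hI (Nat.lt_succ_self 1)).le) := by
    rw [← hc1 1]
    exact uu1_inj.comp dd1_inj
  exact T.bond_not_injective hninj (hI (Nat.lt_succ_self 1)) this
end

section
/- Let G be a finitely presented group and H a group, and suppose there exist group homomorphisms s : H → G and r : G → H with r ∘ s = id_H (so H is a retract of G). Then H is finitely presented. -/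
/-- A group is finitely presented if it is isomorphic to the quotient of a free group
on a finite set by the normal closure of a finite set of relators. -/
def FinitelyPresented (G : Type*) [Group G] : Prop :=
  ∃ (n : ℕ) (rels : Finset (FreeGroup (Fin n))),
    Nonempty (PresentedGroup (rels : Set (FreeGroup (Fin n))) ≃* G)

/-- A retract of a finitely presented group is finitely presented: if `G` is finitely
presented and there are homomorphisms `s : H →* G` and `r : G →* H` with
`r ∘ s = id_H`, then `H` is finitely presented. -/
theorem finitelyPresented_of_retract {G H : Type*} [Group G] [Group H]
    (hG : FinitelyPresented G) (s : H →* G) (r : G →* H)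
    (hrs : r.comp s = MonoidHom.id H) : FinitelyPresented H := by
  classical
  obtain ⟨n, rels, ⟨e⟩⟩ := hG
  have hrs' : ∀ x, r (s x) = x := fun x => DFunLike.congr_fun hrs x
  set π : FreeGroup (Fin n) →* G :=
    e.toMonoidHom.comp (PresentedGroup.mk (rels : Set (FreeGroup (Fin n)))) with hπdef
  have hπ : Function.Surjective π :=
    e.surjective.comp (PresentedGroup.mk_surjective _)
  choose w hw using fun i : Fin n => hπ (s (r (π (FreeGroup.of i))))
  set nrels : Finset (FreeGroup (Fin n)) :=
    rels ∪ Finset.image (fun i => FreeGroup.of i * (w i)⁻¹) Finset.univ with hnrels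
  refine ⟨n, nrels, ⟨?_⟩⟩
  -- π kills rels
  have hmk1 : ∀ x ∈ (rels : Set (FreeGroup (Fin n))),
      PresentedGroup.mk (rels : Set (FreeGroup (Fin n))) x = 1 := by
    intro x hx
    exact (QuotientGroup.eq_one_iff x).2 (Subgroup.subset_normalClosure hx)
  have hπ1 : ∀ x ∈ (rels : Set (FreeGroup (Fin n))), π x = 1 := by
    intro x hx
    show e _ = 1
    rw [hmk1 x hx, map_one]
  -- the map φ : PresentedGroup nrels →* H
  have hliftf : (FreeGroup.lift (fun i : Fin n => r (π (FreeGroup.of i)))) = r.comp π := by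
    apply FreeGroup.ext_hom; intro a; simp
  have hφcond : ∀ x ∈ (nrels : Set (FreeGroup (Fin n))),
      (FreeGroup.lift (fun i : Fin n => r (π (FreeGroup.of i)))) x = 1 := by
    intro x hx
    rw [hliftf]
    simp only [hnrels, Finset.coe_union, Set.mem_union, Finset.coe_image, Set.mem_image,
      Finset.mem_coe, Finset.mem_image] at hx
    rcases hx with hx | ⟨i, _, rfl⟩
    · simp [hπ1 x hx]
    · simp only [MonoidHom.comp_apply, map_mul, map_inv]
      rw [hw i, hrs']
      simp
  set φ : PresentedGroup (nrels : Set (FreeGroup (Fin n))) →* H :=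
    PresentedGroup.toGroup hφcond with hφdef
  -- the projection proj : PresentedGroup rels →* PresentedGroup nrels
  have hliftg : (FreeGroup.lift (fun i : Fin n =>
      (PresentedGroup.of i : PresentedGroup (nrels : Set (FreeGroup (Fin n))))))
      = PresentedGroup.mk _ := by
    apply FreeGroup.ext_hom; intro a; simp [PresentedGroup.of]
  have hprojcond : ∀ x ∈ (rels : Set (FreeGroup (Fin n))),
      (FreeGroup.lift (fun i : Fin n =>
      (PresentedGroup.of i : PresentedGroup (nrels : Set (FreeGroup (Fin n)))))) x = 1 := by
    intro x hx
    rw [hliftg]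
    refine (QuotientGroup.eq_one_iff x).2 (Subgroup.subset_normalClosure ?_)
    simp only [hnrels, Finset.coe_union, Set.mem_union]
    exact Or.inl hx
  set proj : PresentedGroup (rels : Set (FreeGroup (Fin n))) →*
      PresentedGroup (nrels : Set (FreeGroup (Fin n))) :=
    PresentedGroup.toGroup hprojcond with hprojdef
  have hproj_mk : ∀ x : FreeGroup (Fin n),
      proj (PresentedGroup.mk _ x) = PresentedGroup.mk _ x := by
    intro x
    show (FreeGroup.lift _) x = _
    rw [hliftg]
  set ψ : H →* PresentedGroup (nrels : Set (FreeGroup (Fin n))) :=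
    (proj.comp e.symm.toMonoidHom).comp s with hψdef
  have hφproj : φ.comp proj = r.comp e.toMonoidHom := by
    ext i
    show φ (proj (PresentedGroup.of i)) = r (e (PresentedGroup.of i))
    have h1 : proj (PresentedGroup.of i) = PresentedGroup.of i := hproj_mk (FreeGroup.of i)
    rw [h1]
    show φ (PresentedGroup.of i) = r (π (FreeGroup.of i))
    simp [hφdef]
  refine ⟨⟨⇑φ, ⇑ψ, ?_, ?_⟩, map_mul φ⟩
  · -- left inverse : ψ ∘ φ = id
    intro x
    have : ψ.comp φ = MonoidHom.id _ := by
      ext i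
      show ψ (φ (PresentedGroup.of i)) = PresentedGroup.of i
      have h1 : φ (PresentedGroup.of i) = r (π (FreeGroup.of i)) := by simp [hφdef]
      rw [h1]
      show proj (e.symm (s (r (π (FreeGroup.of i))))) = _
      rw [← hw i]
      have h2 : e.symm (π (w i)) = PresentedGroup.mk _ (w i) := by
        show e.symm (e _) = _
        simp
      rw [h2, hproj_mk]
      have h3 : (PresentedGroup.mk (nrels : Set (FreeGroup (Fin n))))
          (FreeGroup.of i * (w i)⁻¹) = 1 := by
        refine (QuotientGroup.eq_one_iff _).2 (Subgroup.subset_normalClosure ?_)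
        simp only [hnrels, Finset.coe_union, Set.mem_union, Finset.coe_image, Set.mem_image,
          Finset.mem_coe]
        exact Or.inr ⟨i, by simp, rfl⟩
      have h4 := h3
      rw [map_mul, map_inv, mul_inv_eq_one] at h4
      exact h4.symm
    exact DFunLike.congr_fun this x
  · -- right inverse : φ ∘ ψ = id
    intro h
    show φ (proj (e.symm (s h))) = h
    have := DFunLike.congr_fun hφproj (e.symm (s h))
    simp only [MonoidHom.comp_apply] at this
    rw [this]
    show r (e (e.symm (s h))) = h
    rw [e.apply_symm_apply, hrs']
end

section
/- Let G be a group acting by homeomorphisms on topological spaces X and Y, with Y Hausdorff. Assume: (i) the action on X is cocompact, i.e., there is a compact set K ⊆ X with ⋃_{g∈G} g·K = X; and (ii) the action on Y is proper, i.e., for every compact L ⊆ Y the set {g ∈ G : (g·L) ∩ L ≠ ∅} is finite. If f : X → Y is a continuous G-equivariant map, then f is proper: f⁻¹(L) is compact for every compact L ⊆ Y. -/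
open Pointwise

/-- Let a group `G` act by homeomorphisms on spaces `X` and `Y`, with `Y` Hausdorff,
the action on `X` cocompact and the action on `Y` proper.  Then every continuous
`G`-equivariant map `f : X → Y` is proper: preimages of compact sets are compact. -/
theorem proper_of_equivariant_cocompact_properAction
    {G : Type*} [Group G] {X Y : Type*} [TopologicalSpace X] [TopologicalSpace Y]
    [T2Space Y] [MulAction G X] [MulAction G Y]
    (hcX : ∀ g : G, Continuous fun x : X => g • x)
    (hcY : ∀ g : G, Continuous fun y : Y => g • y)
    (K : Set X) (hK : IsCompact K) (hcover : ⋃ g : G, g • K = Set.univ)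
    (hproper : ∀ L : Set Y, IsCompact L → {g : G | (g • L) ∩ L ≠ ∅}.Finite)
    (f : X → Y) (hf : Continuous f) (heq : ∀ (g : G) (x : X), f (g • x) = g • f x) :
    ∀ L : Set Y, IsCompact L → IsCompact (f ⁻¹' L) := by
  intro L hL
  set M : Set Y := L ∪ f '' K with hM
  have hMc : IsCompact M := hL.union (hK.image hf)
  have hSfin : {g : G | (g • M) ∩ M ≠ ∅}.Finite := hproper M hMc
  have hsub : f ⁻¹' L ⊆ ⋃ g ∈ {g : G | (g • M) ∩ M ≠ ∅}, g • K := by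
    intro x hx
    have hxu : x ∈ ⋃ g : G, g • K := by rw [hcover]; trivial
    obtain ⟨_, ⟨g, rfl⟩, hxg⟩ := hxu
    obtain ⟨k, hk, hgk⟩ := hxg
    have hgS : g ∈ {g : G | (g • M) ∩ M ≠ ∅} := by
      have hfk : f k ∈ M := Or.inr ⟨k, hk, rfl⟩
      have hfx : f x ∈ M := Or.inl hx
      have : f x ∈ (g • M) ∩ M := by
        refine ⟨⟨f k, hfk, ?_⟩, hfx⟩
        rw [← hgk, heq]
      exact Set.nonempty_iff_ne_empty.mp ⟨_, this⟩
    exact Set.mem_biUnion hgS ⟨k, hk, hgk⟩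
  have hcomp : IsCompact (⋃ g ∈ {g : G | (g • M) ∩ M ≠ ∅}, g • K) :=
    hSfin.isCompact_biUnion (fun g _ => hK.image (hcX g))
  exact hcomp.of_isClosed_subset (hL.isClosed.preimage hf) hsub
end

section
/- Every nonempty, connected, locally compact, locally path-connected, separable metric space X admits an efficient exhaustion by compacta: there exist compact subsets K_0 ⊆ K_1 ⊆ K_2 ⊆ ⋯ of X with ⋃_{i} K_i = X and K_i contained in the interior of K_{i+1} for every i, such that each K_i is connected and every connected component of X ∖ K_i has noncompact closure. -/
/-!
Fill the holes of a compact connected set `K`, i.e. add to it every component of `Kᶜ` with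
compact closure. The result is efficient: it stays connected because the closure of every
component of `Kᶜ` touches `K` (the space is connected), and it stays compact because only the
finitely many components of `Kᶜ` that cover the compact frontier of a compact neighbourhood `L`
of `K` can leave `L`. Since every compact set lies in the interior of a compact connected set
(finitely many connected compact neighbourhoods joined by paths), alternately filling holes
and absorbing the next piece of a compact covering of the σ-compact space gives the exhaustion.
-/

open Set Topology

section

variable {X : Type*} [TopologicalSpace X]

theorem IsPreconnected.inter_frontier_nonempty {s t : Set X} (hs : IsPreconnected s)
    (hst : (s ∩ t).Nonempty) (hst' : (s \ t).Nonempty) : (s ∩ frontier t).Nonempty := by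
  by_contra h
  have h_int : ∀ x ∈ s, x ∈ closure t → x ∈ interior t := fun x hxs hxt => by
    by_contra hxi
    exact h ⟨x, hxs, hxt, hxi⟩
  obtain ⟨x, hxs, hxt⟩ := hst
  have hs_int : s ⊆ interior t :=
    hs.subset_of_closure_inter_subset isOpen_interior
      ⟨x, hxs, h_int x hxs (subset_closure hxt)⟩
      fun y ⟨hy, hys⟩ => h_int y hys (closure_mono interior_subset hy)
  obtain ⟨y, hys, hyt⟩ := hst'
  exact hyt (interior_subset (hs_int hys))

theorem closure_connectedComponentIn_inter_subset (F : Set X) (x : X) :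
    closure (connectedComponentIn F x) ∩ F ⊆ connectedComponentIn F x := by
  rintro p ⟨hp, hpF⟩
  have hx : x ∈ F := connectedComponentIn_nonempty_iff.mp (closure_nonempty_iff.mp ⟨p, hp⟩)
  have h_insert : IsPreconnected (insert p (connectedComponentIn F x)) :=
    isPreconnected_connectedComponentIn.subset_closure (subset_insert _ _)
      (insert_subset hp subset_closure)
  exact h_insert.subset_connectedComponentIn (mem_insert_of_mem _ (mem_connectedComponentIn hx))
    (insert_subset hpF (connectedComponentIn_subset F x)) (mem_insert p _)

theorem IsClosed.connectedComponentIn {F : Set X} (hF : IsClosed F) (x : X) :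
    IsClosed (connectedComponentIn F x) :=
  isClosed_of_closure_subset fun _ hp => closure_connectedComponentIn_inter_subset F x
    ⟨hp, closure_minimal (connectedComponentIn_subset F x) hF hp⟩

theorem closure_connectedComponentIn_compl_inter_nonempty [ConnectedSpace X]
    [LocallyConnectedSpace X] {K : Set X} (hK : IsClosed K) (hKne : K.Nonempty) {x : X}
    (hx : x ∈ Kᶜ) : (closure (connectedComponentIn Kᶜ x) ∩ K).Nonempty := by
  by_contra h
  have h_closure : closure (connectedComponentIn Kᶜ x) ⊆ Kᶜ := fun p hp hpK => h ⟨p, hp, hpK⟩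
  have h_clopen : IsClopen (connectedComponentIn Kᶜ x) :=
    ⟨isClosed_of_closure_subset fun p hp =>
      closure_connectedComponentIn_inter_subset Kᶜ x ⟨hp, h_closure hp⟩,
      hK.isOpen_compl.connectedComponentIn⟩
  obtain ⟨k, hk⟩ := hKne
  have h_univ := h_clopen.eq_univ ⟨x, mem_connectedComponentIn hx⟩
  exact connectedComponentIn_subset Kᶜ x (h_univ ▸ mem_univ k) hk

theorem exists_mem_nhds_isCompact_isConnected [T2Space X] [WeaklyLocallyCompactSpace X]
    [LocallyConnectedSpace X] (x : X) : ∃ N ∈ 𝓝 x, IsCompact N ∧ IsConnected N := by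
  obtain ⟨V, hV, hVx⟩ := exists_compact_mem_nhds x
  exact ⟨connectedComponentIn V x, connectedComponentIn_mem_nhds hVx,
    hV.of_isClosed_subset (hV.isClosed.connectedComponentIn x) (connectedComponentIn_subset V x),
    isConnected_connectedComponentIn_iff.mpr (mem_of_mem_nhds hVx)⟩

theorem exists_isCompact_isConnected_subset_interior [T2Space X] [WeaklyLocallyCompactSpace X]
    [LocallyConnectedSpace X] [PathConnectedSpace X] {C : Set X} (hC : IsCompact C) :
    ∃ K, IsCompact K ∧ IsConnected K ∧ C ⊆ interior K := by
  choose N hNx hN hNconn using exists_mem_nhds_isCompact_isConnected (X := X)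
  obtain ⟨t, -, hCt⟩ :=
    hC.elim_nhds_subcover (fun x => interior (N x)) fun x _ => interior_mem_nhds.2 (hNx x)
  let x₀ : X := Classical.arbitrary X
  let S : X → Set X := fun x => N x ∪ range (PathConnectedSpace.somePath x₀ x)
  have hx₀S : ∀ x, x₀ ∈ S x := fun x => Or.inr ⟨0, Path.source _⟩
  have hS : ∀ x, IsCompact (S x) := fun x => (hN x).union (isCompact_range (Path.continuous _))
  have hSconn : ∀ x, IsPreconnected (S x) := fun x =>
    (hNconn x).isPreconnected.union x (mem_of_mem_nhds (hNx x)) ⟨1, Path.target _⟩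
      (isPreconnected_range (Path.continuous _))
  refine ⟨⋃ x ∈ insert x₀ (t : Set X), S x,
    (t.finite_toSet.insert x₀).isCompact_biUnion fun x _ => hS x,
    ⟨⟨x₀, mem_biUnion (mem_insert x₀ _) (hx₀S x₀)⟩, ?_⟩, ?_⟩
  · rw [← sUnion_image]
    exact isPreconnected_sUnion x₀ _ (forall_mem_image.2 fun x _ => hx₀S x)
      (forall_mem_image.2 fun x _ => hSconn x)
  · refine hCt.trans (interior_maximal ?_ (isOpen_biUnion fun _ _ => isOpen_interior))
    exact iUnion₂_subset fun x hx y hy =>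
      mem_biUnion (mem_insert_of_mem x₀ hx) (Or.inl (interior_subset hy))

/-- A hole of `K` is a connected component of `Kᶜ` with compact closure. -/
def fillHoles (K : Set X) : Set X :=
  {y | y ∈ Kᶜ → IsCompact (closure (connectedComponentIn Kᶜ y))}

section fillHoles

variable {K : Set X}

theorem subset_fillHoles : K ⊆ fillHoles K := fun _ hy hy' => absurd hy hy'

theorem mem_fillHoles_iff_of_mem_connectedComponentIn {u y : X}
    (hu : u ∈ connectedComponentIn Kᶜ y) : u ∈ fillHoles K ↔ y ∈ fillHoles K := by
  have hy : y ∈ Kᶜ := connectedComponentIn_nonempty_iff.mp ⟨u, hu⟩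
  have hu' : u ∈ Kᶜ := connectedComponentIn_subset Kᶜ y hu
  simp only [fillHoles, mem_ofPred_eq, ← connectedComponentIn_eq hu, hy, hu', forall_const]

theorem connectedComponentIn_subset_fillHoles {y : X} (hy : y ∈ fillHoles K) :
    connectedComponentIn Kᶜ y ⊆ fillHoles K :=
  fun _ hu => (mem_fillHoles_iff_of_mem_connectedComponentIn hu).2 hy

theorem connectedComponentIn_subset_compl_fillHoles {y : X} (hy : y ∈ (fillHoles K)ᶜ) :
    connectedComponentIn Kᶜ y ⊆ (fillHoles K)ᶜ :=
  fun _ hu => mt (mem_fillHoles_iff_of_mem_connectedComponentIn hu).1 hy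

theorem closure_connectedComponentIn_subset_fillHoles {y : X} (hy : y ∈ fillHoles K) :
    closure (connectedComponentIn Kᶜ y) ⊆ fillHoles K := fun p hp => by
  by_cases hpK : p ∈ K
  · exact subset_fillHoles hpK
  · exact connectedComponentIn_subset_fillHoles hy
      (closure_connectedComponentIn_inter_subset Kᶜ y ⟨hp, hpK⟩)

theorem connectedComponentIn_compl_fillHoles {y : X} (hy : y ∈ (fillHoles K)ᶜ) :
    connectedComponentIn (fillHoles K)ᶜ y = connectedComponentIn Kᶜ y := by
  have hyK : y ∈ Kᶜ := fun h => hy (subset_fillHoles h)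
  exact Subset.antisymm (connectedComponentIn_mono y (compl_subset_compl.2 subset_fillHoles))
    (isPreconnected_connectedComponentIn.subset_connectedComponentIn (mem_connectedComponentIn hyK)
      (connectedComponentIn_subset_compl_fillHoles hy))

theorem not_isCompact_closure_connectedComponentIn_compl_fillHoles {y : X}
    (hy : y ∈ (fillHoles K)ᶜ) :
    ¬IsCompact (closure (connectedComponentIn (fillHoles K)ᶜ y)) := by
  rw [connectedComponentIn_compl_fillHoles hy]
  exact fun h => hy fun _ => h

variable [LocallyConnectedSpace X]

theorem isClosed_fillHoles (hK : IsClosed K) : IsClosed (fillHoles K) := by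
  rw [← isOpen_compl_iff, isOpen_iff_mem_nhds]
  intro y hy
  have hyK : y ∈ Kᶜ := fun h => hy (subset_fillHoles h)
  exact Filter.mem_of_superset (hK.isOpen_compl.connectedComponentIn.mem_nhds
    (mem_connectedComponentIn hyK)) (connectedComponentIn_subset_compl_fillHoles hy)

variable [ConnectedSpace X]

theorem isConnected_fillHoles (hK : IsClosed K) (hKconn : IsConnected K) :
    IsConnected (fillHoles K) := by
  obtain ⟨k, hk⟩ := hKconn.nonempty
  refine ⟨⟨k, subset_fillHoles hk⟩, isPreconnected_of_forall k fun y hy => ?_⟩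
  by_cases hyK : y ∈ K
  · exact ⟨K, subset_fillHoles, hk, hyK, hKconn.isPreconnected⟩
  obtain ⟨p, hpC, hpK⟩ := closure_connectedComponentIn_compl_inter_nonempty hK ⟨k, hk⟩ hyK
  exact ⟨K ∪ closure (connectedComponentIn Kᶜ y),
    union_subset subset_fillHoles (closure_connectedComponentIn_subset_fillHoles hy),
    Or.inl hk, Or.inr (subset_closure (mem_connectedComponentIn hyK)),
    hKconn.isPreconnected.union p hpK hpC isPreconnected_connectedComponentIn.closure⟩

theorem isCompact_fillHoles [T2Space X] [WeaklyLocallyCompactSpace X] (hK : IsCompact K)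
    (hKne : K.Nonempty) : IsCompact (fillHoles K) := by
  obtain ⟨L, hL, hKL⟩ := exists_compact_superset hK
  have hLfr : IsCompact (frontier L) :=
    hL.of_isClosed_subset isClosed_frontier hL.isClosed.frontier_subset
  obtain ⟨t, -, ht, hLt⟩ := hLfr.elim_finite_subcover_image
    (c := fun z => connectedComponentIn Kᶜ z)
    (fun _ _ => hK.isClosed.isOpen_compl.connectedComponentIn)
    fun z hz => mem_biUnion hz (mem_connectedComponentIn fun hzK => hz.2 (hKL hzK))
  -- a hole of `K` leaving `L` is connected and meets `interior L`, so it crosses `frontier L`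
  refine (hL.union ((ht.sep fun z => IsCompact (closure (connectedComponentIn Kᶜ z))
    ).isCompact_biUnion fun z hz => hz.2)).of_isClosed_subset
    (isClosed_fillHoles hK.isClosed) fun y hy => ?_
  by_cases hyL : y ∈ L
  · exact Or.inl hyL
  have hyK : y ∈ Kᶜ := fun h => hyL (interior_subset (hKL h))
  obtain ⟨p, hpC, hpK⟩ := closure_connectedComponentIn_compl_inter_nonempty hK.isClosed hKne hyK
  obtain ⟨a, haL, haC⟩ := mem_closure_iff.mp hpC _ isOpen_interior (hKL hpK)
  obtain ⟨w, hwC, hwL⟩ := isPreconnected_connectedComponentIn.inter_frontier_nonempty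
    ⟨a, haC, interior_subset haL⟩ ⟨y, mem_connectedComponentIn hyK, hyL⟩
  obtain ⟨z, hzt, hwz⟩ := mem_iUnion₂.mp (hLt hwL)
  have hzy : connectedComponentIn Kᶜ z = connectedComponentIn Kᶜ y := by
    rw [connectedComponentIn_eq hwz, connectedComponentIn_eq hwC]
  refine Or.inr (mem_biUnion (x := z) ⟨hzt, hzy ▸ hy hyK⟩ ?_)
  rw [hzy]
  exact subset_closure (mem_connectedComponentIn hyK)

end fillHoles

structure IsEfficient (K : Set X) : Prop where
  isCompact : IsCompact K
  isConnected : IsConnected K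
  not_isCompact_closure : ∀ x ∈ Kᶜ, ¬IsCompact (closure (connectedComponentIn Kᶜ x))

theorem exists_isEfficient_subset_interior [T2Space X] [WeaklyLocallyCompactSpace X]
    [LocallyConnectedSpace X] [PathConnectedSpace X] {C : Set X} (hC : IsCompact C) :
    ∃ K, IsEfficient K ∧ C ⊆ interior K := by
  obtain ⟨L, hL, hLconn, hCL⟩ := exists_isCompact_isConnected_subset_interior hC
  exact ⟨fillHoles L, ⟨isCompact_fillHoles hL hLconn.nonempty,
    isConnected_fillHoles hL.isClosed hLconn,
    fun _ => not_isCompact_closure_connectedComponentIn_compl_fillHoles⟩,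
    hCL.trans (interior_mono subset_fillHoles)⟩

theorem exists_seq_subset_interior_succ [SigmaCompactSpace X] {P : Set X → Prop}
    (hP : ∀ K, P K → IsCompact K) (h : ∀ C, IsCompact C → ∃ K, P K ∧ C ⊆ interior K) :
    ∃ K : ℕ → Set X, (∀ n, P (K n)) ∧ (∀ n, K n ⊆ interior (K (n + 1))) ∧ ⋃ n, K n = univ := by
  choose! F hFP hF using h
  let K : ℕ → Set X := fun n =>
    Nat.rec (F (compactCovering X 0)) (fun n Kn => F (Kn ∪ compactCovering X (n + 1))) n
  have hKP : ∀ n, P (K n) := by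
    intro n
    induction n with
    | zero => exact hFP _ (isCompact_compactCovering X 0)
    | succ n ih => exact hFP _ ((hP _ ih).union (isCompact_compactCovering X (n + 1)))
  have hK : ∀ n, K n ∪ compactCovering X (n + 1) ⊆ interior (K (n + 1)) := fun n =>
    hF _ ((hP _ (hKP n)).union (isCompact_compactCovering X (n + 1)))
  have hcov : ∀ n, compactCovering X n ⊆ K n := by
    rintro (_ | n)
    · exact (hF _ (isCompact_compactCovering X 0)).trans interior_subset
    · exact subset_union_right.trans ((hK n).trans interior_subset)
  refine ⟨K, hKP, fun n => subset_union_left.trans (hK n), ?_⟩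
  exact eq_univ_of_forall fun x =>
    mem_iUnion.2 ((mem_iUnion.1 ((iUnion_compactCovering X).symm ▸ mem_univ x)).imp
      fun n hn => hcov n hn)

end

theorem exists_efficient_exhaustion_general {X : Type*} [MetricSpace X]
    [TopologicalSpace.SeparableSpace X] [ConnectedSpace X]
    [LocallyCompactSpace X] [LocallyPathConnectedSpace X] :
    ∃ K : ℕ → Set X,
      (∀ i, IsCompact (K i)) ∧
      (∀ i, K i ⊆ K (i + 1)) ∧
      (∀ i, K i ⊆ interior (K (i + 1))) ∧
      (⋃ i, K i) = Set.univ ∧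
      (∀ i, IsConnected (K i)) ∧
      (∀ i, ∀ x ∈ (K i)ᶜ, ¬ IsCompact (closure (connectedComponentIn ((K i)ᶜ) x))) := by
  have := UniformSpace.secondCountable_of_separable X
  have := pathConnectedSpace_iff_connectedSpace.mpr ‹ConnectedSpace X›
  obtain ⟨K, hK, hKsucc, hKunion⟩ :=
    exists_seq_subset_interior_succ (fun (K : Set X) => IsEfficient.isCompact (K := K))
      fun _ => exists_isEfficient_subset_interior
  exact ⟨K, fun i => (hK i).isCompact, fun i => (hKsucc i).trans interior_subset, hKsucc,
    hKunion, fun i => (hK i).isConnected, fun i => (hK i).not_isCompact_closure⟩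

/-- Every nonempty, connected, locally compact, locally path-connected, separable
metric space admits an efficient exhaustion by compacta: compact sets
`K 0 ⊆ K 1 ⊆ ⋯` with union `X`, each contained in the interior of the next, each
connected, and such that every connected component of the complement of each `K i`
has noncompact closure. -/
theorem exists_efficient_exhaustion {X : Type*} [MetricSpace X]
    [TopologicalSpace.SeparableSpace X] [Nonempty X] [ConnectedSpace X]
    [LocallyCompactSpace X] [LocallyPathConnectedSpace X] :
    ∃ K : ℕ → Set X,
      (∀ i, IsCompact (K i)) ∧
      (∀ i, K i ⊆ K (i + 1)) ∧
      (∀ i, K i ⊆ interior (K (i + 1))) ∧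
      (⋃ i, K i) = Set.univ ∧
      (∀ i, IsConnected (K i)) ∧
      (∀ i, ∀ x ∈ (K i)ᶜ, ¬ IsCompact (closure (connectedComponentIn ((K i)ᶜ) x))) :=
  exists_efficient_exhaustion_general
end
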